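/- arXiv:2310.20032 — 2 statements merged into one kernel-verified Lean document; each statement's English description precedes it below -/
import Mathlib

section
/- Let g and T be positive integers and let A be a finite nonempty g-thin Sidon set of integers with k := |A|. Then (diam(A) + T) · (g·T·(T − 1) + k·T − (2·S_g(A,T) + V(A,T))) = k²·T². (Equivalently, diam(A) = k²T² / (gT(T−1) + kT − (2S_g(A,T) + V(A,T))) − T.) -/
open scoped Classical

noncomputable section

/-- A finite set of integers is a Sidon set if all nontrivial solutions to
`a - b = c - d` are excluded. -/
def IsSidon (A : Finset ℤ) : Prop :=
  ∀ a ∈ A, ∀ b ∈ A, ∀ c ∈ A, ∀ d ∈ A, a - b = c - d → (a = b ∧ c = d) ∨ (a = c ∧ b = d)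

/-- The minimum of a finite set of integers (junk value `0` for `∅`). -/
def Amin (A : Finset ℤ) : ℤ := A.min.getD 0

/-- The maximum of a finite set of integers (junk value `0` for `∅`). -/
def Amax (A : Finset ℤ) : ℤ := A.max.getD 0

/-- The diameter `max A - min A` of a finite set of integers. -/
def diam (A : Finset ℤ) : ℤ := Amax A - Amin A

/-- `A_i^{(T)}`, the number of elements of `A` in the window `[i - T, i)`. -/
def wc (A : Finset ℤ) (T i : ℤ) : ℕ := (A.filter (fun a => i - T ≤ a ∧ a < i)).card

/-- `Ā(A,T) = |A|·T/(T + diam A)`. -/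
def Abar (A : Finset ℤ) (T : ℤ) : ℚ := ((A.card : ℚ) * (T : ℚ)) / ((T : ℚ) + (diam A : ℚ))

/-- `V(A,T)`, the total squared deviation of the window counts from `Ā(A,T)`. -/
def V (A : Finset ℤ) (T : ℤ) : ℚ :=
  ∑ i ∈ Finset.Icc (Amin A + 1) (Amax A + T), ((wc A T i : ℚ) - Abar A T) ^ 2

/-- `S(A,T) = Σ (T - r)` over `1 ≤ r ≤ T - 1` not of the form `a - b` with `a, b ∈ A`. -/
def S (A : Finset ℤ) (T : ℤ) : ℤ :=
  ∑ r ∈ Finset.Icc 1 (T - 1), if ∃ a ∈ A, ∃ b ∈ A, a - b = r then 0 else T - r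

/-- A finite set of integers is a `g`-thin Sidon set if every nonzero integer has at
most `g` representations as a difference of two elements of `A`. -/
def IsGThinSidon (g : ℕ) (A : Finset ℤ) : Prop :=
  ∀ d : ℤ, d ≠ 0 → ((A ×ˢ A).filter (fun p => p.1 - p.2 = d)).card ≤ g

/-- The number of ordered pairs `(a, b) ∈ A × A` with `a - b = r`. -/
def repCount (A : Finset ℤ) (r : ℤ) : ℕ :=
  ((A ×ˢ A).filter (fun p => p.1 - p.2 = r)).card

/-- `S_g(A,T) = Σ_{s=0}^{g−1} Σ_{r ∈ D_s} (g − s)·(T − r)`, where `D_s` is the set of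
`r ∈ [1, T−1]` with exactly `s` representations as a difference of elements of `A`. -/
def Sg (g : ℕ) (A : Finset ℤ) (T : ℤ) : ℤ :=
  ∑ s ∈ Finset.range g,
    ∑ r ∈ (Finset.Icc (1 : ℤ) (T - 1)).filter (fun r => repCount A r = s),
      ((g : ℤ) - (s : ℤ)) * (T - r)

open Finset

namespace GThinAux

variable {A : Finset ℤ} {T : ℤ} {g : ℕ}

lemma Amin_le {a : ℤ} (ha : a ∈ A) : Amin A ≤ a := by
  have hne : A.Nonempty := ⟨a, ha⟩
  have h1 : Amin A = A.min' hne := by rw [Amin, ← Finset.coe_min' hne]; rfl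
  rw [h1]; exact Finset.min'_le A a ha

lemma le_Amax {a : ℤ} (ha : a ∈ A) : a ≤ Amax A := by
  have hne : A.Nonempty := ⟨a, ha⟩
  have h1 : Amax A = A.max' hne := by rw [Amax, ← Finset.coe_max' hne]; rfl
  rw [h1]; exact Finset.le_max' A a ha

lemma diam_nonneg (hA : A.Nonempty) : 0 ≤ diam A := by
  obtain ⟨a, ha⟩ := hA
  have := Amin_le ha; have := le_Amax ha
  unfold diam; omega

lemma wc_eq (i : ℤ) :
    (wc A T i : ℤ) = ∑ a ∈ A, if i ∈ Icc (a + 1) (a + T) then (1 : ℤ) else 0 := by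
  rw [wc, Finset.card_filter]
  push_cast
  refine Finset.sum_congr rfl fun a _ => ?_
  simp only [Finset.mem_Icc]
  split_ifs <;> omega

lemma sum_ind {c d : ℤ} (hsub : Icc c d ⊆ Icc (Amin A + 1) (Amax A + T)) :
    ∑ i ∈ Icc (Amin A + 1) (Amax A + T), (if i ∈ Icc c d then (1 : ℤ) else 0)
      = (d + 1 - c).toNat := by
  rw [Finset.sum_ite_mem, Finset.inter_eq_right.2 hsub, Finset.sum_const, Int.card_Icc]
  simp

lemma sum_wc (hA : A.Nonempty) (hT : 0 < T) :
    ∑ i ∈ Icc (Amin A + 1) (Amax A + T), (wc A T i : ℤ) = A.card * T := by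
  calc ∑ i ∈ Icc (Amin A + 1) (Amax A + T), (wc A T i : ℤ)
      = ∑ i ∈ Icc (Amin A + 1) (Amax A + T), ∑ a ∈ A,
          (if i ∈ Icc (a + 1) (a + T) then (1 : ℤ) else 0) :=
        Finset.sum_congr rfl fun i _ => wc_eq i
    _ = ∑ a ∈ A, ∑ i ∈ Icc (Amin A + 1) (Amax A + T),
          (if i ∈ Icc (a + 1) (a + T) then (1 : ℤ) else 0) := Finset.sum_comm
    _ = ∑ a ∈ A, (T : ℤ) := by
        refine Finset.sum_congr rfl fun a ha => ?_
        rw [sum_ind (Finset.Icc_subset_Icc (by have := Amin_le ha; omega)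
          (by have := le_Amax ha; omega))]
        omega
    _ = A.card * T := by rw [Finset.sum_const, nsmul_eq_mul]

lemma sum_wc_sq (hA : A.Nonempty) (hT : 0 < T) :
    ∑ i ∈ Icc (Amin A + 1) (Amax A + T), (wc A T i : ℤ) ^ 2
      = ∑ p ∈ A ×ˢ A, max (T - |p.1 - p.2|) 0 := by
  calc ∑ i ∈ Icc (Amin A + 1) (Amax A + T), (wc A T i : ℤ) ^ 2
      = ∑ i ∈ Icc (Amin A + 1) (Amax A + T), ∑ p ∈ A ×ˢ A,
          (if i ∈ Icc (max p.1 p.2 + 1) (min p.1 p.2 + T) then (1 : ℤ) else 0) := by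
        refine Finset.sum_congr rfl fun i _ => ?_
        rw [sq, wc_eq i, Finset.sum_mul_sum, ← Finset.sum_product']
        refine Finset.sum_congr rfl fun p _ => ?_
        simp only [Finset.mem_Icc]
        rcases le_total p.1 p.2 with h | h
        · rw [max_eq_right h, min_eq_left h]
          split_ifs <;> omega
        · rw [max_eq_left h, min_eq_right h]
          split_ifs <;> omega
    _ = ∑ p ∈ A ×ˢ A, ∑ i ∈ Icc (Amin A + 1) (Amax A + T),
          (if i ∈ Icc (max p.1 p.2 + 1) (min p.1 p.2 + T) then (1 : ℤ) else 0) :=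
        Finset.sum_comm
    _ = ∑ p ∈ A ×ˢ A, max (T - |p.1 - p.2|) 0 := by
        refine Finset.sum_congr rfl fun p hp => ?_
        obtain ⟨h1, h2⟩ := Finset.mem_product.1 hp
        have ha1 := Amin_le h1; have ha2 := Amin_le h2
        have hb1 := le_Amax h1; have hb2 := le_Amax h2
        have hmax : Amin A + 1 ≤ max p.1 p.2 + 1 := by
          rcases max_choice p.1 p.2 with h | h <;> omega
        have hmin : min p.1 p.2 + T ≤ Amax A + T := by
          rcases min_choice p.1 p.2 with h | h <;> omega
        rw [sum_ind (Finset.Icc_subset_Icc hmax hmin), Int.toNat_eq_max]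
        have habs : |p.1 - p.2| = max p.1 p.2 - min p.1 p.2 := by
          rw [max_sub_min_eq_abs, abs_sub_comm]
        rw [habs]
        congr 1
        ring

lemma sum_swap (A : Finset ℤ) (h : ℤ → ℤ) :
    ∑ p ∈ A ×ˢ A, h (p.2 - p.1) = ∑ p ∈ A ×ˢ A, h (p.1 - p.2) := by
  rw [Finset.sum_product, Finset.sum_product]
  exact Finset.sum_comm

lemma repCount_zero : repCount A 0 = A.card := by
  rw [repCount]
  refine Finset.card_bij' (fun p _ => p.1) (fun a _ => (a, a)) ?_ ?_ ?_ ?_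
  · intro p hp
    obtain ⟨hp1, _⟩ := Finset.mem_product.1 (Finset.mem_filter.1 hp).1
    exact hp1
  · intro a ha
    simp [Finset.mem_filter, Finset.mem_product, ha]
  · intro p hp
    have h2 := (Finset.mem_filter.1 hp).2
    have hpe : p.1 = p.2 := by omega
    show (p.1, p.1) = p
    conv_rhs => rw [← Prod.mk.eta (p := p)]
    rw [hpe]
  · intro a ha
    rfl

lemma sum_fiber (hT : 0 < T) :
    ∑ p ∈ (A ×ˢ A).filter (fun p => p.1 - p.2 ∈ Icc (1 : ℤ) (T - 1)), (T - (p.1 - p.2))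
      = ∑ r ∈ Icc (1 : ℤ) (T - 1), (repCount A r : ℤ) * (T - r) := by
  rw [← Finset.sum_fiberwise_eq_sum_filter (A ×ˢ A) (Icc (1 : ℤ) (T - 1))
    (fun p => p.1 - p.2) (fun p => T - (p.1 - p.2))]
  refine Finset.sum_congr rfl fun r hr => ?_
  have : ∀ p ∈ (A ×ˢ A).filter (fun p => p.1 - p.2 = r), T - (p.1 - p.2) = T - r := by
    intro p hp
    rw [(Finset.mem_filter.1 hp).2]
  rw [Finset.sum_congr rfl this, Finset.sum_const, repCount, nsmul_eq_mul]

lemma max_split (hT : 0 < T) (d : ℤ) :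
    max (T - |d|) 0 = (if d = 0 then T else 0)
      + (if d ∈ Icc (1 : ℤ) (T - 1) then T - d else 0)
      + (if -d ∈ Icc (1 : ℤ) (T - 1) then T + d else 0) := by
  simp only [Finset.mem_Icc]
  rcases abs_cases d with ⟨h1, h2⟩ | ⟨h1, h2⟩ <;> rw [h1] <;>
    rcases le_total (T - d) 0 with h | h <;> rcases le_total (T + d) 0 with h' | h' <;>
    simp only [max_def] <;> split_ifs <;> omega

lemma sum_f (hT : 0 < T) :
    ∑ p ∈ A ×ˢ A, max (T - |p.1 - p.2|) 0
      = (A.card : ℤ) * T + 2 * ∑ r ∈ Icc (1 : ℤ) (T - 1), (repCount A r : ℤ) * (T - r) := by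
  have e1 : ∑ p ∈ A ×ˢ A, (if p.1 - p.2 = 0 then T else 0) = (A.card : ℤ) * T := by
    rw [← Finset.sum_filter, Finset.sum_const, ← repCount, repCount_zero, nsmul_eq_mul]
  have e2 : ∑ p ∈ A ×ˢ A, (if p.1 - p.2 ∈ Icc (1 : ℤ) (T - 1) then T - (p.1 - p.2) else 0)
      = ∑ r ∈ Icc (1 : ℤ) (T - 1), (repCount A r : ℤ) * (T - r) := by
    rw [← Finset.sum_filter, sum_fiber hT]
  have e3 : ∑ p ∈ A ×ˢ A, (if -(p.1 - p.2) ∈ Icc (1 : ℤ) (T - 1) then T + (p.1 - p.2) else 0)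
      = ∑ r ∈ Icc (1 : ℤ) (T - 1), (repCount A r : ℤ) * (T - r) := by
    have := sum_swap A (fun d => if d ∈ Icc (1 : ℤ) (T - 1) then T - d else 0)
    calc ∑ p ∈ A ×ˢ A, (if -(p.1 - p.2) ∈ Icc (1 : ℤ) (T - 1) then T + (p.1 - p.2) else 0)
        = ∑ p ∈ A ×ˢ A, (if p.2 - p.1 ∈ Icc (1 : ℤ) (T - 1) then T - (p.2 - p.1) else 0) := by
          refine Finset.sum_congr rfl fun p _ => ?_
          have hn : -(p.1 - p.2) = p.2 - p.1 := by ring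
          rw [hn]
          split_ifs with h
          · ring
          · rfl
      _ = ∑ p ∈ A ×ˢ A, (if p.1 - p.2 ∈ Icc (1 : ℤ) (T - 1) then T - (p.1 - p.2) else 0) :=
          this
      _ = ∑ r ∈ Icc (1 : ℤ) (T - 1), (repCount A r : ℤ) * (T - r) := by
          rw [← Finset.sum_filter, sum_fiber hT]
  calc ∑ p ∈ A ×ˢ A, max (T - |p.1 - p.2|) 0
      = ∑ p ∈ A ×ˢ A, ((if p.1 - p.2 = 0 then T else 0)
          + (if p.1 - p.2 ∈ Icc (1 : ℤ) (T - 1) then T - (p.1 - p.2) else 0)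
          + (if -(p.1 - p.2) ∈ Icc (1 : ℤ) (T - 1) then T + (p.1 - p.2) else 0)) :=
        Finset.sum_congr rfl fun p _ => max_split hT (p.1 - p.2)
    _ = (A.card : ℤ) * T + 2 * ∑ r ∈ Icc (1 : ℤ) (T - 1), (repCount A r : ℤ) * (T - r) := by
        rw [Finset.sum_add_distrib, Finset.sum_add_distrib, e1, e2, e3]
        ring

lemma gauss (hT : 0 < T) : 2 * ∑ r ∈ Icc (1 : ℤ) (T - 1), (T - r) = T * (T - 1) := by
  have h1 : ∑ r ∈ Icc (1 : ℤ) (T - 1), (T - r) = ∑ r ∈ Icc (1 : ℤ) (T - 1), r := by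
    refine Finset.sum_nbij' (fun r => T - r) (fun r => T - r) ?_ ?_ ?_ ?_ ?_ <;>
      intro a ha <;> simp only [Finset.mem_Icc] at * <;> omega
  have h2 : ∑ r ∈ Icc (1 : ℤ) (T - 1), ((T - r) + r) = (T - 1) * T := by
    have : ∀ r ∈ Icc (1 : ℤ) (T - 1), (T - r) + r = T := fun r _ => by ring
    rw [Finset.sum_congr rfl this, Finset.sum_const, Int.card_Icc, nsmul_eq_mul]
    have : ((T - 1 + 1 - 1).toNat : ℤ) = T - 1 := by omega
    rw [this]
  calc 2 * ∑ r ∈ Icc (1 : ℤ) (T - 1), (T - r)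
      = ∑ r ∈ Icc (1 : ℤ) (T - 1), (T - r) + ∑ r ∈ Icc (1 : ℤ) (T - 1), r := by
        rw [← h1]; ring
    _ = ∑ r ∈ Icc (1 : ℤ) (T - 1), ((T - r) + r) := (Finset.sum_add_distrib).symm
    _ = T * (T - 1) := by rw [h2]; ring

lemma repCount_le (hthin : IsGThinSidon g A) {r : ℤ} (hr : r ≠ 0) : repCount A r ≤ g :=
  hthin r hr

lemma sg_eq (hthin : IsGThinSidon g A) (hT : 0 < T) :
    2 * Sg g A T = (g : ℤ) * T * (T - 1)
      - 2 * ∑ r ∈ Icc (1 : ℤ) (T - 1), (repCount A r : ℤ) * (T - r) := by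
  have h1 : Sg g A T
      = ∑ r ∈ Icc (1 : ℤ) (T - 1), ((g : ℤ) - (repCount A r : ℤ)) * (T - r) := by
    calc Sg g A T
        = ∑ s ∈ Finset.range g,
            ∑ r ∈ (Icc (1 : ℤ) (T - 1)).filter (fun r => repCount A r = s),
              ((g : ℤ) - (repCount A r : ℤ)) * (T - r) := by
          refine Finset.sum_congr rfl fun s hs => Finset.sum_congr rfl fun r hr => ?_
          rw [(Finset.mem_filter.1 hr).2]
      _ = ∑ r ∈ (Icc (1 : ℤ) (T - 1)).filter (fun r => repCount A r ∈ Finset.range g),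
            ((g : ℤ) - (repCount A r : ℤ)) * (T - r) :=
          Finset.sum_fiberwise_eq_sum_filter _ _ _ _
      _ = ∑ r ∈ Icc (1 : ℤ) (T - 1), ((g : ℤ) - (repCount A r : ℤ)) * (T - r) := by
          rw [← Finset.sum_filter_add_sum_filter_not (Icc (1 : ℤ) (T - 1))
            (fun r => repCount A r ∈ Finset.range g)]
          have hz : ∑ r ∈ (Icc (1 : ℤ) (T - 1)).filter
              (fun r => ¬ repCount A r ∈ Finset.range g),
              ((g : ℤ) - (repCount A r : ℤ)) * (T - r) = 0 := by
            refine Finset.sum_eq_zero fun r hr => ?_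
            obtain ⟨hr1, hr2⟩ := Finset.mem_filter.1 hr
            rw [Finset.mem_Icc] at hr1
            have hrne : r ≠ 0 := by omega
            have hle := repCount_le hthin hrne
            rw [Finset.mem_range, not_lt] at hr2
            have : repCount A r = g := le_antisymm hle hr2
            rw [this]
            ring
          rw [hz, add_zero]
  rw [h1]
  have expand : ∀ r ∈ Icc (1 : ℤ) (T - 1),
      ((g : ℤ) - (repCount A r : ℤ)) * (T - r)
        = (g : ℤ) * (T - r) - (repCount A r : ℤ) * (T - r) := fun r _ => by ring
  rw [Finset.sum_congr rfl expand, Finset.sum_sub_distrib, ← Finset.mul_sum]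
  linear_combination (g : ℤ) * gauss hT

end GThinAux

/-- The generalized ETSSE for `g`-thin Sidon sets:
`(diam A + T) · (g·T·(T−1) + k·T − (2·S_g(A,T) + V(A,T))) = k²·T²`. -/
theorem gthin_etsse (g : ℕ) (hg : 0 < g) (T : ℤ) (hT : 0 < T) (A : Finset ℤ)
    (hA : A.Nonempty) (hthin : IsGThinSidon g A) :
    ((diam A : ℚ) + (T : ℚ)) *
      ((g : ℚ) * (T : ℚ) * ((T : ℚ) - 1) + (A.card : ℚ) * (T : ℚ)
        - (2 * (Sg g A T : ℚ) + V A T)) =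
    (A.card : ℚ) ^ 2 * (T : ℚ) ^ 2 := by
  classical
  have hd := GThinAux.diam_nonneg hA
  set N := Finset.Icc (Amin A + 1) (Amax A + T) with hN
  have hcardZ : ((N.card : ℤ)) = diam A + T := by
    rw [hN, Int.card_Icc]
    unfold diam at *
    omega
  have hcard : ((N.card : ℚ)) = (diam A : ℚ) + (T : ℚ) := by
    exact_mod_cast congrArg (fun z : ℤ => (z : ℚ)) hcardZ
  have hsum1 : ∑ i ∈ N, (wc A T i : ℚ) = (A.card : ℚ) * (T : ℚ) := by
    have := GThinAux.sum_wc hA hT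
    exact_mod_cast congrArg (fun z : ℤ => (z : ℚ)) this
  set W : ℚ := ((∑ r ∈ Finset.Icc (1 : ℤ) (T - 1), (repCount A r : ℤ) * (T - r) : ℤ) : ℚ)
    with hW
  have hW2 : W = ∑ r ∈ Finset.Icc (1 : ℤ) (T - 1), ((repCount A r : ℚ)) * ((T : ℚ) - (r : ℚ)) := by
    rw [hW]; push_cast; rfl
  have hsum2 : ∑ i ∈ N, (wc A T i : ℚ) ^ 2 = (A.card : ℚ) * (T : ℚ) + 2 * W := by
    have h := (GThinAux.sum_wc_sq hA hT).trans (GThinAux.sum_f hT)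
    have := congrArg (fun z : ℤ => (z : ℚ)) h
    push_cast at this
    rw [hW2, hN]
    exact this
  have hSg : 2 * (Sg g A T : ℚ) = (g : ℚ) * (T : ℚ) * ((T : ℚ) - 1) - 2 * W := by
    have := congrArg (fun z : ℤ => (z : ℚ)) (GThinAux.sg_eq hthin hT)
    push_cast at this
    rw [hW2]
    exact this
  have hden : (T : ℚ) + (diam A : ℚ) ≠ 0 := by
    have h1 : (0 : ℚ) < (T : ℚ) := by exact_mod_cast hT
    have h2 : (0 : ℚ) ≤ (diam A : ℚ) := by exact_mod_cast hd
    linarith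
  have hV : V A T = ((A.card : ℚ) * T + 2 * W) - 2 * Abar A T * ((A.card : ℚ) * T)
      + ((diam A : ℚ) + T) * (Abar A T) ^ 2 := by
    rw [V]
    have expand : ∀ i ∈ N, ((wc A T i : ℚ) - Abar A T) ^ 2
        = (wc A T i : ℚ) ^ 2 - 2 * Abar A T * (wc A T i : ℚ) + (Abar A T) ^ 2 :=
      fun i _ => by ring
    rw [Finset.sum_congr rfl expand, Finset.sum_add_distrib, Finset.sum_sub_distrib,
      ← Finset.mul_sum, Finset.sum_const, nsmul_eq_mul, hcard, hsum1, hsum2]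
  rw [hV, hSg, Abar]
  field_simp
  ring
end
end

section
/- Let g and T be positive integers and let A be a finite nonempty g-thin Sidon set of integers. Then Σ_{i=min(A)+1}^{max(A)+T} A_i^{(T)}·(A_i^{(T)} − 1)/2 = g·T·(T−1)/2 − S_g(A,T). -/
open scoped Classical

noncomputable section

-- AUX LEMMAS

lemma amin_le {A : Finset ℤ} (hA : A.Nonempty) {a : ℤ} (ha : a ∈ A) : Amin A ≤ a := by
  have h := Finset.min_le ha
  unfold Amin
  rcases Finset.min_of_nonempty hA with ⟨m, hm⟩
  rw [hm] at h ⊢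
  exact_mod_cast h

lemma le_amax {A : Finset ℤ} (hA : A.Nonempty) {a : ℤ} (ha : a ∈ A) : a ≤ Amax A := by
  have h := Finset.le_max ha
  unfold Amax
  rcases Finset.max_of_nonempty hA with ⟨m, hm⟩
  rw [hm] at h ⊢
  exact_mod_cast h

lemma window_pair_card (A : Finset ℤ) (T : ℤ) (hA : A.Nonempty) {a b : ℤ}
    (ha : a ∈ A) (hb : b ∈ A) :
    ((Finset.Icc (Amin A + 1) (Amax A + T)).filter
      (fun i => (i - T ≤ a ∧ a < i) ∧ (i - T ≤ b ∧ b < i))).card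
      = (min a b + T - max a b).toNat := by
  have h1 : Amin A ≤ a := amin_le hA ha
  have h2 : a ≤ Amax A := le_amax hA ha
  have h3 : Amin A ≤ b := amin_le hA hb
  have h4 : b ≤ Amax A := le_amax hA hb
  have : ((Finset.Icc (Amin A + 1) (Amax A + T)).filter
      (fun i => (i - T ≤ a ∧ a < i) ∧ (i - T ≤ b ∧ b < i)))
      = Finset.Icc (max a b + 1) (min a b + T) := by
    ext i
    simp only [Finset.mem_filter, Finset.mem_Icc, le_max_iff, max_le_iff, le_min_iff,
      min_le_iff]
    omega
  rw [this, Int.card_Icc]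
  congr 1
  omega

lemma offDiag_filter (A : Finset ℤ) (p : ℤ → Prop) [DecidablePred p] :
    (A.filter p).offDiag = A.offDiag.filter (fun q => p q.1 ∧ p q.2) := by
  ext q
  simp only [Finset.mem_offDiag, Finset.mem_filter]
  tauto

lemma sum_Icc_id_nat (n : ℕ) : (∑ r ∈ Finset.Icc (1:ℤ) (n:ℤ), r) * 2 = n * (n+1) := by
  induction n with
  | zero => simp
  | succ k ih =>
    have h : Finset.Icc (1:ℤ) ((k:ℤ)+1) = insert ((k:ℤ)+1) (Finset.Icc 1 (k:ℤ)) := by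
      ext x; simp [Finset.mem_Icc]; omega
    push_cast
    rw [h, Finset.sum_insert (by simp [Finset.mem_Icc])]
    push_cast at ih
    ring_nf
    ring_nf at ih
    linarith

lemma gauss (T : ℤ) (hT : 0 < T) :
    (∑ r ∈ Finset.Icc (1:ℤ) (T-1), (T - r)) * 2 = T * (T - 1) := by
  have hre : (∑ r ∈ Finset.Icc (1:ℤ) (T-1), (T - r)) = ∑ r ∈ Finset.Icc (1:ℤ) (T-1), r := by
    apply Finset.sum_nbij' (fun r => T - r) (fun r => T - r) <;>
      intros <;> simp_all [Finset.mem_Icc] <;> omega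
  have hn : ((T-1).toNat : ℤ) = T - 1 := by omega
  have := sum_Icc_id_nat (T-1).toNat
  rw [hn] at this
  rw [hre, this]
  ring_nf

lemma Sg_eq (g : ℕ) (A : Finset ℤ) (T : ℤ) (hthin : IsGThinSidon g A) :
    Sg g A T = ∑ r ∈ Finset.Icc (1:ℤ) (T-1), ((g : ℤ) - repCount A r) * (T - r) := by
  have hmaps : ∀ r ∈ Finset.Icc (1:ℤ) (T-1), repCount A r ∈ Finset.range (g+1) := by
    intro r hr
    simp only [Finset.mem_Icc] at hr
    simp only [Finset.mem_range, Nat.lt_succ_iff]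
    exact hthin r (by omega)
  rw [← Finset.sum_fiberwise_of_maps_to hmaps (fun r => ((g : ℤ) - repCount A r) * (T - r))]
  rw [Finset.sum_range_succ]
  have hzero : ∑ r ∈ (Finset.Icc (1:ℤ) (T-1)).filter (fun r => repCount A r = g),
      ((g : ℤ) - repCount A r) * (T - r) = 0 := by
    apply Finset.sum_eq_zero
    intro r hr
    simp only [Finset.mem_filter] at hr
    rw [hr.2]; ring
  rw [hzero, add_zero]
  unfold Sg
  apply Finset.sum_congr rfl
  intro s _
  apply Finset.sum_congr rfl
  intro r hr
  simp only [Finset.mem_filter] at hr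
  rw [hr.2]

/-- Counting identity for `g`-thin Sidon sets:
`Σ_i A_i^{(T)}(A_i^{(T)} − 1)/2 = g·T·(T−1)/2 − S_g(A,T)`. -/
theorem gthin_counting_identity (g : ℕ) (hg : 0 < g) (T : ℤ) (hT : 0 < T)
    (A : Finset ℤ) (hA : A.Nonempty) (hthin : IsGThinSidon g A) :
    ∑ i ∈ Finset.Icc (Amin A + 1) (Amax A + T),
        (wc A T i : ℚ) * ((wc A T i : ℚ) - 1) / 2 =
    (g : ℚ) * (T : ℚ) * ((T : ℚ) - 1) / 2 - (Sg g A T : ℚ) := by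
  set I := Finset.Icc (Amin A + 1) (Amax A + T) with hI
  set W : ℤ → Finset ℤ := fun i => A.filter (fun a => i - T ≤ a ∧ a < i) with hW
  -- Step 1: per-i, the summand is offDiag card
  have hwc : ∀ i, wc A T i = (W i).card := fun i => rfl
  have step1 : ∀ i, (wc A T i : ℚ) * ((wc A T i : ℚ) - 1) = ((W i).offDiag.card : ℚ) := by
    intro i
    rw [Finset.offDiag_card, hwc]
    have hle : (W i).card ≤ (W i).card * (W i).card := by nlinarith [(W i).card.zero_le]
    rw [Nat.cast_sub hle]
    push_cast
    ring
  -- Step 2: swap order of summation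
  have hoff : ∀ i, (W i).offDiag = A.offDiag.filter
      (fun q => (i - T ≤ q.1 ∧ q.1 < i) ∧ (i - T ≤ q.2 ∧ q.2 < i)) := by
    intro i
    rw [hW]
    exact offDiag_filter A _
  have step2 : ∑ i ∈ I, (W i).offDiag.card
      = ∑ q ∈ A.offDiag, (min q.1 q.2 + T - max q.1 q.2).toNat := by
    calc ∑ i ∈ I, (W i).offDiag.card
        = ∑ i ∈ I, ∑ q ∈ A.offDiag,
            (if (i - T ≤ q.1 ∧ q.1 < i) ∧ (i - T ≤ q.2 ∧ q.2 < i) then 1 else 0) := by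
          refine Finset.sum_congr rfl fun i _ => ?_
          rw [hoff i, Finset.card_filter]
      _ = ∑ q ∈ A.offDiag, ∑ i ∈ I,
            (if (i - T ≤ q.1 ∧ q.1 < i) ∧ (i - T ≤ q.2 ∧ q.2 < i) then 1 else 0) :=
          Finset.sum_comm
      _ = _ := by
          refine Finset.sum_congr rfl fun q hq => ?_
          rw [← Finset.card_filter]
          have hq' := Finset.mem_offDiag.mp hq
          exact window_pair_card A T hA hq'.1 hq'.2.1
  -- Step 3: split by sign of the difference
  have e1 : A.offDiag.filter (fun q => 0 < q.1 - q.2)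
      = (A ×ˢ A).filter (fun q => 0 < q.1 - q.2) := by
    ext q
    simp only [Finset.mem_filter, Finset.mem_offDiag, Finset.mem_product]
    constructor
    · rintro ⟨⟨h1, h2, _⟩, h4⟩; exact ⟨⟨h1, h2⟩, h4⟩
    · rintro ⟨⟨h1, h2⟩, h4⟩; exact ⟨⟨h1, h2, by intro h; omega⟩, h4⟩
  have step3 : ∑ q ∈ A.offDiag, (min q.1 q.2 + T - max q.1 q.2).toNat
      = 2 * ∑ q ∈ (A ×ˢ A).filter (fun q => 0 < q.1 - q.2), (T - (q.1 - q.2)).toNat := by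
    rw [← Finset.sum_filter_add_sum_filter_not A.offDiag (fun q => 0 < q.1 - q.2)]
    have epos : ∑ q ∈ A.offDiag.filter (fun q => 0 < q.1 - q.2),
          (min q.1 q.2 + T - max q.1 q.2).toNat
        = ∑ q ∈ (A ×ˢ A).filter (fun q => 0 < q.1 - q.2), (T - (q.1 - q.2)).toNat := by
      rw [e1]
      refine Finset.sum_congr rfl fun q hq => ?_
      simp only [Finset.mem_filter] at hq
      congr 1
      omega
    have eneg : ∑ q ∈ A.offDiag.filter (fun q => ¬ 0 < q.1 - q.2),
          (min q.1 q.2 + T - max q.1 q.2).toNat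
        = ∑ q ∈ (A ×ˢ A).filter (fun q => 0 < q.1 - q.2), (T - (q.1 - q.2)).toNat := by
      apply Finset.sum_nbij' (fun q => Prod.swap q) (fun q => Prod.swap q)
      · intro q hq
        simp only [Finset.mem_filter, Finset.mem_offDiag] at hq
        simp only [Finset.mem_filter, Finset.mem_product, Prod.fst_swap, Prod.snd_swap]
        obtain ⟨⟨h1, h2, h3⟩, h4⟩ := hq
        refine ⟨⟨h2, h1⟩, ?_⟩
        have : q.1 ≠ q.2 := h3
        omega
      · intro q hq
        simp only [Finset.mem_filter, Finset.mem_product] at hq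
        simp only [Finset.mem_filter, Finset.mem_offDiag, Prod.fst_swap, Prod.snd_swap]
        exact ⟨⟨hq.1.2, hq.1.1, by intro h; omega⟩, by omega⟩
      · intro q _; rfl
      · intro q _; rfl
      · intro q hq
        simp only [Finset.mem_filter, Finset.mem_offDiag] at hq
        simp only [Prod.fst_swap, Prod.snd_swap]
        congr 1
        have : q.1 ≠ q.2 := hq.1.2.2
        omega
    rw [epos, eneg, two_mul]
  -- Step 4: group by difference
  have step4 : ∑ q ∈ (A ×ˢ A).filter (fun q => 0 < q.1 - q.2), (T - (q.1 - q.2)).toNat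
      = ∑ r ∈ Finset.Icc (1:ℤ) (T-1), repCount A r * (T - r).toNat := by
    have per : ∀ q ∈ (A ×ˢ A).filter (fun q => 0 < q.1 - q.2),
        (T - (q.1 - q.2)).toNat = ∑ r ∈ Finset.Icc (1:ℤ) (T-1),
          if q.1 - q.2 = r then (T - r).toNat else 0 := by
      intro q hq
      simp only [Finset.mem_filter] at hq
      rw [Finset.sum_ite_eq]
      by_cases h : q.1 - q.2 ∈ Finset.Icc (1:ℤ) (T-1)
      · simp [h]
      · simp only [h, if_false]
        simp only [Finset.mem_Icc] at h
        omega
    rw [Finset.sum_congr rfl per, Finset.sum_comm]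
    refine Finset.sum_congr rfl fun r hr => ?_
    rw [← Finset.sum_filter, Finset.sum_const, smul_eq_mul]
    congr 1
    have hfe : ((A ×ˢ A).filter (fun q => 0 < q.1 - q.2)).filter (fun q => q.1 - q.2 = r)
        = (A ×ˢ A).filter (fun q => q.1 - q.2 = r) := by
      simp only [Finset.mem_Icc] at hr
      ext q
      simp only [Finset.mem_filter]
      constructor
      · tauto
      · rintro ⟨h1, h2⟩; exact ⟨⟨h1, by omega⟩, h2⟩
    rw [hfe]
    rfl
  -- Casting facts
  have castK : ((∑ r ∈ Finset.Icc (1:ℤ) (T-1), repCount A r * (T - r).toNat : ℕ) : ℤ)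
      = ∑ r ∈ Finset.Icc (1:ℤ) (T-1), (repCount A r : ℤ) * (T - r) := by
    push_cast
    refine Finset.sum_congr rfl fun r hr => ?_
    simp only [Finset.mem_Icc] at hr
    congr 1
    omega
  have hZ : (Sg g A T) = (g : ℤ) * (∑ r ∈ Finset.Icc (1:ℤ) (T-1), (T - r))
      - ∑ r ∈ Finset.Icc (1:ℤ) (T-1), (repCount A r : ℤ) * (T - r) := by
    rw [Sg_eq g A T hthin, Finset.mul_sum, ← Finset.sum_sub_distrib]
    exact Finset.sum_congr rfl fun r _ => by ring
  have hG := gauss T hT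
  -- Put everything together over ℚ
  have cast1 : ∑ i ∈ I, (wc A T i : ℚ) * ((wc A T i : ℚ) - 1)
      = ((∑ i ∈ I, (W i).offDiag.card : ℕ) : ℚ) := by
    push_cast
    exact Finset.sum_congr rfl fun i _ => step1 i
  have key : ∑ i ∈ I, (wc A T i : ℚ) * ((wc A T i : ℚ) - 1)
      = 2 * ((∑ r ∈ Finset.Icc (1:ℤ) (T-1), (repCount A r : ℤ) * (T - r) : ℤ) : ℚ) := by
    rw [cast1, step2, step3, step4, ← castK]
    push_cast
    ring
  have hGQ : ((∑ r ∈ Finset.Icc (1:ℤ) (T-1), (T - r) : ℤ) : ℚ) * 2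
      = (T : ℚ) * ((T : ℚ) - 1) := by
    exact_mod_cast congrArg (fun z : ℤ => (z : ℚ)) hG
  have hSgQ : ((Sg g A T : ℤ) : ℚ)
      = (g : ℚ) * ((∑ r ∈ Finset.Icc (1:ℤ) (T-1), (T - r) : ℤ) : ℚ)
        - ((∑ r ∈ Finset.Icc (1:ℤ) (T-1), (repCount A r : ℤ) * (T - r) : ℤ) : ℚ) := by
    rw [hZ]; push_cast; ring
  rw [← Finset.sum_div]
  rw [key, hSgQ]
  linear_combination ((g : ℚ)/2) * hGQ
end
end
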